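/- Let $(a_n)_{n\geq 1}$ be a sequence of positive reals with $\sum_{n=1}^\infty a_n = \infty$. Then for every $\delta < 0$, the series $\sum_{n=1}^\infty a_n \left(\sum_{k=1}^n a_k\right)^{\delta - 1}$ converges. -/

import Mathlib

open Filter Finset

/-! Writing `Sₙ = ∑_{k ≤ n} aₖ`, convexity of `t ↦ t ^ δ` on `(0, ∞)` gives the tangent-line
bound `(-δ) aₙ₊₁ Sₙ₊₁ ^ (δ - 1) ≤ Sₙ ^ δ - Sₙ₊₁ ^ δ`, so the partial sums of the series are
dominated by a telescoping sum, which is at most `S₀ ^ δ / (-δ)`. -/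

lemma Real.one_add_mul_sub_one_le_rpow_of_nonpos {u δ : ℝ} (hu : 0 < u) (hδ : δ ≤ 0) :
    1 + δ * (u - 1) ≤ u ^ δ := by
  calc 1 + δ * (u - 1) ≤ 1 + Real.log u * δ := by
        nlinarith [Real.log_le_sub_one_of_pos hu]
    _ ≤ Real.exp (Real.log u * δ) := by linarith [Real.add_one_le_exp (Real.log u * δ)]
    _ = u ^ δ := (Real.rpow_def_of_pos hu δ).symm

lemma Real.rpow_add_mul_rpow_sub_one_mul_sub_le_rpow_of_nonpos {x y δ : ℝ} (hx : 0 < x)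
    (hy : 0 < y) (hδ : δ ≤ 0) : y ^ δ + δ * y ^ (δ - 1) * (x - y) ≤ x ^ δ := by
  have hbern := Real.one_add_mul_sub_one_le_rpow_of_nonpos (div_pos hx hy) hδ
  rw [Real.div_rpow hx.le hy.le] at hbern
  have hyδ : 0 < y ^ δ := Real.rpow_pos_of_pos hy δ
  calc y ^ δ + δ * y ^ (δ - 1) * (x - y) = y ^ δ * (1 + δ * (x / y - 1)) := by
        rw [Real.rpow_sub_one hy.ne']
        field_simp
    _ ≤ y ^ δ * (x ^ δ / y ^ δ) := mul_le_mul_of_nonneg_left hbern hyδ.le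
    _ = x ^ δ := by field_simp

lemma summable_of_le_sub_succ {f g : ℕ → ℝ} (hf : ∀ n, 0 ≤ f n) (hg : ∀ n, 0 ≤ g n)
    (h : ∀ n, f n ≤ g n - g (n + 1)) : Summable f :=
  summable_of_sum_range_le (c := g 0) hf fun n =>
    calc ∑ i ∈ range n, f i ≤ ∑ i ∈ range n, (g i - g (i + 1)) :=
          sum_le_sum fun i _ => h i
      _ = g 0 - g n := sum_range_sub' g n
      _ ≤ g 0 := sub_le_self _ (hg n)

theorem abel_dini_converge_general (a : ℕ → ℝ) (ha : ∀ n, 0 < a n)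
    (δ : ℝ) (hδ : δ < 0) :
    Summable (fun n => a n * (∑ k ∈ Finset.range (n + 1), a k) ^ (δ - 1)) := by
  set S : ℕ → ℝ := fun n => ∑ k ∈ range (n + 1), a k
  have hS : ∀ n, 0 < S n := fun n => sum_pos (fun i _ => ha i) nonempty_range_add_one
  have hstep : ∀ n, S n - S (n + 1) = -a (n + 1) := fun n => by
    simp only [S, sum_range_succ _ (n + 1)]
    ring
  have htelescope :
      ∀ n, a (n + 1) * S (n + 1) ^ (δ - 1) ≤ S n ^ δ / -δ - S (n + 1) ^ δ / -δ := by
    intro n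
    have htangent := Real.rpow_add_mul_rpow_sub_one_mul_sub_le_rpow_of_nonpos (hS n) (hS (n + 1))
      hδ.le
    rw [hstep] at htangent
    rw [← sub_div, le_div_iff₀ (neg_pos.mpr hδ)]
    linarith
  refine (summable_nat_add_iff 1).mp
    (summable_of_le_sub_succ (fun n => ?_) (fun n => ?_) htelescope)
  · exact mul_nonneg (ha _).le (Real.rpow_nonneg (hS _).le _)
  · exact div_nonneg (Real.rpow_nonneg (hS n).le _) (neg_nonneg.mpr hδ.le)

/-- Abel–Dini: if `∑ aₙ = ∞` with `aₙ > 0`, then for `δ < 0` the series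
`∑ aₙ Sₙ^(δ-1)` converges, where `Sₙ` is the `n`-th partial sum. -/
theorem abel_dini_converge (a : ℕ → ℝ) (ha : ∀ n, 0 < a n)
    (hdiv : Tendsto (fun n => ∑ k ∈ Finset.range (n + 1), a k) atTop atTop)
    (δ : ℝ) (hδ : δ < 0) :
    Summable (fun n => a n * (∑ k ∈ Finset.range (n + 1), a k) ^ (δ - 1)) :=
  abel_dini_converge_general a ha δ hδ
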